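/- arXiv:1507.04373 — 4 statements merged into one kernel-verified Lean document; each statement's English description precedes it below -/
import Mathlib

section
/- Let H be a finite nonabelian simple group and let k ≥ 2 be an integer. Then the direct power G = H × ⋯ × H (k factors) satisfies ω(G) ≥ 7. -/
/-!
For `u v : H` let `(u, v)` denote the element `(u, v, 1, …, 1)` of `H ^ (m + 2)`. Its order
`lcm (orderOf u) (orderOf v)` and the order `|C(u)| * |C(v)| * |H| ^ m` of its centralizer are
invariant under automorphisms, and `|C(u)| < |H|` for `u ≠ 1` because `H` has trivial centre.

Since a `p`-group has nontrivial centre, two primes `p ≠ q` divide `|H|`, and `H` has elements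
of orders `p` and `q`. If it also has a nontrivial element of a third order, the invariants of `1`,
`(u, 1)` and `(u, u)`, for `u` running over these three elements, are all distinct. Otherwise
every nontrivial element has order `p` or `q`. If two elements `x, x'` of the same order have
`|C(x)| < |C(x')|`, the invariants separate `1, (x, 1), (x', 1), (w, 1), (x, x), (x, x'), (w, w)`
for any `w` of the other prime order. The remaining case is impossible: all centralizers of
elements of order `p` then have the same size, which forces them to be Sylow subgroups containing
the element in their centre, so at most `∑ P, |Z(P)| - n_p` elements have order `p`; Burnside's
normal `p`-complement theorem gives `2 |Z(P)| ≤ |N_H(P)|`, so fewer than half of the elements of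
`H` have order `p`, and likewise for `q`.
-/

open scoped MatrixGroups

/-- The number of orbits of the natural action of the automorphism group `Aut G`
on the group `G`. -/
noncomputable def omegaAut (G : Type*) [Group G] : ℕ :=
  Nat.card (MulAction.orbitRel.Quotient (MulAut G) G)

open Subgroup

section AutInvariants

variable {G : Type*} [Group G]

lemma MulAut.card_centralizer_apply (φ : MulAut G) (g : G) :
    Nat.card (centralizer {φ g}) = Nat.card (centralizer {g}) :=
  Nat.card_congr <| (φ.toEquiv.subtypeEquiv fun h => by
    simp [mem_centralizer_singleton_iff, ← map_mul]).symm

lemma le_omegaAut_of_injective [Finite G] {n : ℕ} (g : Fin n → G)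
    (hg : Function.Injective fun i => (orderOf (g i), Nat.card (centralizer {g i}))) :
    n ≤ omegaAut G := by
  have hinj : Function.Injective fun i =>
      (Quotient.mk'' (g i) : MulAction.orbitRel.Quotient (MulAut G) G) := by
    intro i j hij
    obtain ⟨φ, hφ⟩ := Quotient.eq''.mp hij
    apply hg
    simp only [← hφ, MulAut.smul_def, MulEquiv.orderOf_eq, MulAut.card_centralizer_apply]
  simpa [omegaAut] using Nat.card_le_card_of_injective _ hinj

end AutInvariants

section Pi

variable {ι H : Type*} [Group H]

lemma card_centralizer_pi [Fintype ι] (g : ι → H) :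
    Nat.card (centralizer {g}) = ∏ i, Nat.card (centralizer {g i}) := by
  have hmem : ∀ h : ι → H, h ∈ centralizer {g} ↔ ∀ i, h i ∈ centralizer {g i} := by
    simp [mem_centralizer_singleton_iff, funext_iff]
  rw [← Nat.card_pi]
  exact Nat.card_congr ((Equiv.subtypeEquivRight hmem).trans (Equiv.subtypePiEquivPi))

lemma orderOf_finCons {n : ℕ} (a : H) (f : Fin n → H) :
    orderOf (Fin.cons a f : Fin (n + 1) → H) = Nat.lcm (orderOf a) (orderOf f) := by
  simp only [Pi.orderOf, Fin.univ_succ, Finset.cons_eq_insert, Finset.lcm_insert,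
    Finset.map_eq_image, Finset.lcm_image]
  rfl

lemma orderOf_cons_cons {m : ℕ} (u v : H) :
    orderOf (Fin.cons u (Fin.cons v 1) : Fin (m + 2) → H) = Nat.lcm (orderOf u) (orderOf v) := by
  rw [orderOf_finCons, orderOf_finCons, orderOf_one, Nat.lcm_one_right]

@[simp]
lemma card_centralizer_one : Nat.card (centralizer {(1 : H)}) = Nat.card H := by
  rw [show centralizer {(1 : H)} = ⊤ by simp, card_top]

lemma card_centralizer_cons_cons [Finite H] {m : ℕ} (u v : H) :
    Nat.card (centralizer {(Fin.cons u (Fin.cons v 1) : Fin (m + 2) → H)}) =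
      Nat.card (centralizer {u}) * Nat.card (centralizer {v}) * Nat.card H ^ m := by
  simp [card_centralizer_pi, Fin.prod_univ_succ, mul_assoc]

end Pi

lemma two_mul_le_of_dvd_of_ne {d n : ℕ} (hn : n ≠ 0) (hd : d ∣ n) (hne : d ≠ n) : 2 * d ≤ n := by
  obtain ⟨t, rfl⟩ := hd
  have : t ≠ 0 := by rintro rfl; simp at hn
  have : t ≠ 1 := by rintro rfl; simp at hne
  calc 2 * d = d * 2 := mul_comm _ _
    _ ≤ d * t := Nat.mul_le_mul_left d (by omega)

namespace Sylow

variable {G : Type*} [Group G] [Finite G] {p : ℕ} [Fact p.Prime]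

lemma card_center_eq (P Q : Sylow p G) : Nat.card (center P) = Nat.card (center Q) :=
  Nat.card_congr (centerCongr (P.equiv Q)).toEquiv

lemma not_normalizer_le_centralizer (hs : IsSimpleGroup G) (hpG : p ∣ Nat.card G)
    (hG : ¬ IsPGroup p G) (P : Sylow p G) : ¬ normalizer (P : Set G) ≤ centralizer P := by
  intro hP
  have hcard := (MonoidHom.ker_transferSylow_isComplement' P hP).card_mul_card
  rcases hs.eq_bot_or_eq_top_of_normal _ (MonoidHom.transferSylow P hP).normal_ker with h | h
  · rw [h, card_bot, one_mul, P.card_eq_multiplicity] at hcard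
    exact hG (IsPGroup.of_card hcard.symm)
  · rw [h, card_top] at hcard
    have hP : (P : Subgroup G) = ⊥ :=
      card_eq_one.mp (Nat.eq_of_mul_eq_mul_left Nat.card_pos (hcard.trans (mul_one _).symm))
    exact P.not_dvd_index (by rwa [hP, index_bot])

lemma two_mul_card_center_le_card_normalizer (hs : IsSimpleGroup G) (hpG : p ∣ Nat.card G)
    (hG : ¬ IsPGroup p G) (P : Sylow p G) :
    2 * Nat.card (center P) ≤ Nat.card (normalizer (P : Set G)) := by
  have hZP : Nat.card (center P) ∣ Nat.card P := card_subgroup_dvd_card _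
  have hPN : Nat.card P ∣ Nat.card (normalizer (P : Set G)) :=
    card_dvd_of_le le_normalizer
  by_cases hab : Nat.card (center P) = Nat.card P
  -- an abelian `P` is not self-normalizing, by Burnside's transfer theorem
  · rw [hab]
    refine two_mul_le_of_dvd_of_ne Nat.card_pos.ne' hPN fun h => ?_
    have : IsMulCommutative P := by
      rw [← center_eq_top_iff, ← card_eq_iff_eq_top, hab]
    have hN : normalizer (P : Set G) = P :=
      (eq_of_le_of_card_ge le_normalizer h.ge).symm
    exact not_normalizer_le_centralizer hs hpG hG P (hN ▸ le_centralizer _)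
  · exact (two_mul_le_of_dvd_of_ne Nat.card_pos.ne' hZP hab).trans
      (Nat.le_of_dvd Nat.card_pos hPN)

lemma two_mul_sum_card_center_le (hs : IsSimpleGroup G) (hpG : p ∣ Nat.card G)
    (hG : ¬ IsPGroup p G) [Fintype (Sylow p G)] :
    2 * ∑ P : Sylow p G, Nat.card (center P) ≤ Nat.card G := by
  obtain ⟨P⟩ : Nonempty (Sylow p G) := inferInstance
  calc 2 * ∑ Q : Sylow p G, Nat.card (center Q)
      = Nat.card (Sylow p G) * (2 * Nat.card (center P)) := by
        simp only [card_center_eq _ P, Finset.sum_const, Finset.card_univ, smul_eq_mul,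
          Nat.card_eq_fintype_card]
        ring
    _ ≤ Nat.card (Sylow p G) * Nat.card (normalizer (P : Set G)) :=
        Nat.mul_le_mul_left _ (two_mul_card_center_le_card_normalizer hs hpG hG P)
    _ = Nat.card G := by
        rw [card_eq_index_normalizer, mul_comm, card_mul_index]

end Sylow

section ElementOrders

variable {G : Type*} [Group G] {p q : ℕ}

lemma isPGroup_centralizer_of_orderOf_eq (hp : p.Prime) (hq : q.Prime) (hpq : p ≠ q)
    (hord : ∀ g : G, orderOf g = 1 ∨ orderOf g = p ∨ orderOf g = q) {x : G}
    (hx : orderOf x = p) : IsPGroup p (centralizer {x}) := by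
  intro h
  refine ⟨1, Subtype.ext ?_⟩
  have hcomm : Commute x h := (mem_centralizer_singleton_iff.mp h.2).symm
  -- an element `h` of order `q` would make `x * h` an element of order `p * q`
  have hhq : orderOf (h : G) ≠ q := fun hhq => by
    have hmul := hcomm.orderOf_mul_eq_mul_orderOf_of_coprime
      (by rw [hx, hhq]; exact (Nat.coprime_primes hp hq).mpr hpq)
    have := hp.two_le; have := hq.two_le
    rcases hord (x * h) with h1 | h1 | h1 <;> rw [hmul, hx, hhq] at h1 <;> nlinarith
  rw [pow_one, coe_pow, OneMemClass.coe_one, ← orderOf_dvd_iff_pow_eq_one]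
  rcases hord h with h1 | h1 | h1
  · simp [h1]
  · simp [h1]
  · exact absurd h1 hhq

lemma card_orderOf_eq_add_card_ne_add_one [Finite G] (hp : p ≠ 1) (hq : q ≠ 1) (hpq : p ≠ q)
    (hord : ∀ g : G, orderOf g = 1 ∨ orderOf g = p ∨ orderOf g = q) :
    Nat.card {x : G // orderOf x = p} + Nat.card {x : G // orderOf x = q} + 1 = Nat.card G := by
  classical
  have := Fintype.ofFinite G
  have hsplit : ∀ g : G, (if orderOf g = p then 1 else 0) + (if orderOf g = q then 1 else 0) +
      (if g = 1 then 1 else 0) = 1 := by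
    intro g
    rcases hord g with h | h | h <;> simp_all [orderOf_eq_one_iff, eq_comm]
  calc _ = ∑ g : G, ((if orderOf g = p then 1 else 0) + (if orderOf g = q then 1 else 0) +
        (if g = 1 then 1 else 0)) := by
        simp [Finset.sum_add_distrib, Nat.card_eq_fintype_card, Fintype.card_subtype]
    _ = Nat.card G := by simp [hsplit, Nat.card_eq_fintype_card]

lemma card_orderOf_eq_add_card_sylow_le [Finite G] [Fact p.Prime] [Fintype (Sylow p G)]
    (hC : ∀ x : G, orderOf x = p → ∃ P : Sylow p G, centralizer {x} = P) :
    Nat.card {x : G // orderOf x = p} + Nat.card (Sylow p G) ≤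
      ∑ P : Sylow p G, Nat.card (center P) := by
  choose P hP using hC
  have hmem : ∀ x (hx : orderOf x = p), x ∈ (P x hx : Subgroup G) := fun x hx =>
    hP x hx ▸ mem_centralizer_singleton_iff.mpr rfl
  -- `x` of order `p` goes to itself in the centre of `C(x)`; a Sylow `Q` goes to `1 ∈ Z(Q)`
  let f : {x : G // orderOf x = p} ⊕ Sylow p G → Σ Q : Sylow p G, center Q :=
    Sum.elim (fun x => ⟨P x x.2, ⟨⟨x, hmem x x.2⟩, mem_center_iff.mpr fun g => Subtype.ext <|
      mem_centralizer_singleton_iff.mp (by rw [hP]; exact g.2)⟩⟩) (fun Q => ⟨Q, 1⟩)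
  have hf : Function.Injective f := by
    refine Function.Injective.of_comp (f := fun s => ((s.2 : G), s.1)) ?_
    rintro (x | Q) (y | Q') h <;>
      simp only [Function.comp_apply, Sum.elim_inl, Sum.elim_inr, OneMemClass.coe_one,
        Prod.mk.injEq, true_and, f] at h
    · rw [Subtype.ext h.1]
    · exact ((Fact.out : p.Prime).ne_one (x.2 ▸ orderOf_eq_one_iff.mpr h.1)).elim
    · exact ((Fact.out : p.Prime).ne_one (y.2 ▸ orderOf_eq_one_iff.mpr h.1.symm)).elim
    · rw [h]
  rw [← Nat.card_sum, ← Nat.card_sigma]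
  exact Nat.card_le_card_of_injective f hf

end ElementOrders

section SimpleTwoPrimes

variable {G : Type*} [Group G] [Finite G] {p q : ℕ}

lemma two_mul_card_orderOf_eq_add_two_le (hs : IsSimpleGroup G) (hp : p.Prime) (hq : q.Prime)
    (hpq : p ≠ q) (hord : ∀ g : G, orderOf g = 1 ∨ orderOf g = p ∨ orderOf g = q)
    (hpG : p ∣ Nat.card G) (hqG : q ∣ Nat.card G)
    (hcp : ∀ x x' : G, orderOf x = p → orderOf x' = p →
      Nat.card (centralizer {x}) = Nat.card (centralizer {x'})) :
    2 * Nat.card {x : G // orderOf x = p} + 2 ≤ Nat.card G := by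
  have := Fact.mk hp
  have := Fintype.ofFinite (Sylow p G)
  have hG : ¬ IsPGroup p G := fun h => by
    obtain ⟨n, hn⟩ := h.exists_card_eq
    rw [hn] at hqG
    exact hpq ((Nat.prime_dvd_prime_iff_eq hq hp).mp (hq.dvd_of_dvd_pow hqG)).symm
  obtain ⟨P⟩ : Nonempty (Sylow p G) := inferInstance
  have : Nontrivial P := (nontrivial_iff_ne_bot _).mpr (P.ne_bot_of_dvd_card hpG)
  have : Nontrivial (center P) := P.isPGroup'.center_nontrivial
  obtain ⟨z, hz⟩ := exists_ne (1 : center P)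
  have hzP : orderOf (z : G) = p := by
    have hz1 : (z : G) ≠ 1 := fun h => hz (Subtype.ext (Subtype.ext h))
    have hpz : p ∣ orderOf (z : G) := by
      rw [orderOf_coe, orderOf_coe]
      exact P.isPGroup'.to_subgroup _ |>.dvd_orderOf hz
    rcases hord z with h | h | h
    · exact absurd (orderOf_eq_one_iff.mp h) hz1
    · exact h
    · exact absurd ((Nat.prime_dvd_prime_iff_eq hp hq).mp (h ▸ hpz)) hpq
  -- `C(z)` is a `p`-group containing `P`, and by `hcp` all centralizers of order-`p` elements
  -- have the size of `C(z) = P`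
  have hCz : centralizer {(z : G)} = P :=
    P.is_maximal' (isPGroup_centralizer_of_orderOf_eq hp hq hpq hord hzP)
      fun g hg => mem_centralizer_singleton_iff.mpr <|
        congrArg Subtype.val (mem_center_iff.mp z.2 ⟨g, hg⟩)
  have hC : ∀ x : G, orderOf x = p → ∃ Q : Sylow p G, centralizer {x} = Q := fun x hx =>
    ⟨Sylow.ofCard (centralizer {x}) (by rw [hcp x z hx hzP, hCz, P.card_eq_multiplicity]), rfl⟩
  have := card_orderOf_eq_add_card_sylow_le hC
  have := Sylow.two_mul_sum_card_center_le hs hpG hG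
  have : 0 < Nat.card (Sylow p G) := Nat.card_pos
  omega

lemma exists_orderOf_eq_card_centralizer_lt
    (hs : IsSimpleGroup G) (hp : p.Prime) (hq : q.Prime) (hpq : p ≠ q)
    (hord : ∀ g : G, orderOf g = 1 ∨ orderOf g = p ∨ orderOf g = q)
    (hpG : p ∣ Nat.card G) (hqG : q ∣ Nat.card G) :
    ∃ x x' : G, orderOf x = orderOf x' ∧ (orderOf x = p ∨ orderOf x = q) ∧
      Nat.card (centralizer {x}) < Nat.card (centralizer {x'}) := by
  by_contra! h
  have hp' := two_mul_card_orderOf_eq_add_two_le hs hp hq hpq hord hpG hqG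
    fun x x' hx hx' => le_antisymm (h x' x (hx'.trans hx.symm) (.inl hx'))
      (h x x' (hx.trans hx'.symm) (.inl hx))
  have hq' := two_mul_card_orderOf_eq_add_two_le hs hq hp hpq.symm (by grind) hqG hpG
    fun x x' hx hx' => le_antisymm (h x' x (hx'.trans hx.symm) (.inr hx'))
      (h x x' (hx.trans hx'.symm) (.inr hx))
  have := card_orderOf_eq_add_card_ne_add_one hp.ne_one hq.ne_one hpq hord
  omega

end SimpleTwoPrimes

lemma center_eq_bot_of_isSimpleGroup {H : Type*} [Group H] (hs : IsSimpleGroup H)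
    (hna : ¬ ∀ a b : H, a * b = b * a) : center H = ⊥ :=
  (hs.eq_bot_or_eq_top_of_normal _ inferInstance).resolve_right fun h =>
    hna fun a b => mem_center_iff.mp (h ▸ mem_top b) a

section TrivialCenter

variable {H : Type*} [Group H] [Finite H]

lemma exists_two_primes_dvd_card [Nontrivial H] (hZ : center H = ⊥) :
    ∃ p q : ℕ, p.Prime ∧ q.Prime ∧ p ≠ q ∧ p ∣ Nat.card H ∧ q ∣ Nat.card H := by
  obtain ⟨p, hp, hpH⟩ := Nat.exists_prime_and_dvd (Finite.one_lt_card (α := H)).ne'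
  obtain ⟨q, hq, hqH, hqp⟩ : ∃ q : ℕ, q.Prime ∧ q ∣ Nat.card H ∧ q ≠ p := by
    by_contra! h
    have := Fact.mk hp
    have hpow := Nat.eq_prime_pow_of_unique_prime_dvd Nat.card_pos.ne' fun hq hqH => h _ hq hqH
    have := (IsPGroup.of_card hpow).center_nontrivial
    rw [hZ] at this
    exact (nontrivial_iff_ne_bot _).mp this rfl
  exact ⟨p, q, hp, hq, hqp.symm, hpH, hqH⟩

lemma card_centralizer_lt_card (hZ : center H = ⊥) {u : H} (hu : u ≠ 1) :
    Nat.card (centralizer {u}) < Nat.card H := by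
  refine card_le_card_group _ |>.lt_of_ne fun h => hu ?_
  rw [card_eq_iff_eq_top, centralizer_eq_top_iff_subset, hZ, Set.singleton_subset_iff] at h
  exact h

variable {m : ℕ}

lemma le_omegaAut_of_injective_cons_cons {n : ℕ} (u v : Fin n → H)
    (h : Function.Injective fun i => (Nat.lcm (orderOf (u i)) (orderOf (v i)),
      Nat.card (centralizer {u i}) * Nat.card (centralizer {v i}) * Nat.card H ^ m)) :
    n ≤ omegaAut (Fin (m + 2) → H) :=
  le_omegaAut_of_injective (fun i => Fin.cons (u i) (Fin.cons (v i) 1))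
    (by simpa only [orderOf_cons_cons, card_centralizer_cons_cons] using h)

lemma card_centralizer_mul_lt (hZ : center H = ⊥) {u v : H} (hv : v ≠ 1) :
    Nat.card (centralizer {u}) * Nat.card (centralizer {v}) * Nat.card H ^ m <
      Nat.card (centralizer {u}) * Nat.card H * Nat.card H ^ m := by
  have := card_centralizer_lt_card hZ hv
  have : 0 < Nat.card (centralizer {u}) := Nat.card_pos
  have : 0 < Nat.card H ^ m := pow_pos Nat.card_pos m
  gcongr

lemma seven_le_omegaAut_of_three_orders (hZ : center H = ⊥) {x y z : H} (hx : x ≠ 1)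
    (hy : y ≠ 1) (hz : z ≠ 1) (hxy : orderOf x ≠ orderOf y) (hxz : orderOf x ≠ orderOf z)
    (hyz : orderOf y ≠ orderOf z) :
    7 ≤ omegaAut (Fin (m + 2) → H) := by
  have := card_centralizer_mul_lt (m := m) (u := x) hZ hx
  have := card_centralizer_mul_lt (m := m) (u := y) hZ hy
  have := card_centralizer_mul_lt (m := m) (u := z) hZ hz
  have := mt orderOf_eq_one_iff.mp hx
  have := mt orderOf_eq_one_iff.mp hy
  have := mt orderOf_eq_one_iff.mp hz
  apply le_omegaAut_of_injective_cons_cons ![1, x, y, z, x, y, z] ![1, 1, 1, 1, x, y, z]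
  intro i j hij
  fin_cases i <;> fin_cases j <;>
    simp only [Fin.reduceFinMk, Fin.isValue, Fin.zero_eta, Fin.mk_one, Matrix.cons_val,
      Prod.mk.injEq, Nat.lcm_self, Nat.lcm_one_right, orderOf_one, card_centralizer_one]
      at hij ⊢ <;>
    omega

lemma seven_le_omegaAut_of_card_centralizer_lt (hZ : center H = ⊥) {x x' w : H}
    (hxx' : orderOf x = orderOf x')
    (hlt : Nat.card (centralizer {x}) < Nat.card (centralizer {x'})) (hw : w ≠ 1)
    (hxw : orderOf x ≠ orderOf w) :
    7 ≤ omegaAut (Fin (m + 2) → H) := by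
  have hx : x ≠ 1 := by
    rintro rfl
    exact (card_le_card_group _).not_gt (card_centralizer_one (H := H) ▸ hlt)
  have hx1 := mt orderOf_eq_one_iff.mp hx
  have hx' : x' ≠ 1 := fun h => hx1 (by rw [hxx', h, orderOf_one])
  have := card_centralizer_mul_lt (m := m) (u := x) hZ hx
  have := card_centralizer_mul_lt (m := m) (u := x) hZ hx'
  have := card_centralizer_mul_lt (m := m) (u := w) hZ hw
  have := mt orderOf_eq_one_iff.mp hw
  have : 0 < Nat.card (centralizer {x}) := Nat.card_pos
  have : 0 < Nat.card H := Nat.card_pos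
  have : 0 < Nat.card H ^ m := pow_pos Nat.card_pos m
  have : Nat.card (centralizer {x}) * Nat.card (centralizer {x}) * Nat.card H ^ m <
      Nat.card (centralizer {x}) * Nat.card (centralizer {x'}) * Nat.card H ^ m := by gcongr
  have : Nat.card (centralizer {x}) * Nat.card H * Nat.card H ^ m <
      Nat.card (centralizer {x'}) * Nat.card H * Nat.card H ^ m := by gcongr
  apply le_omegaAut_of_injective_cons_cons ![1, x, x', w, x, x, w] ![1, 1, 1, 1, x, x', w]
  intro i j hij
  fin_cases i <;> fin_cases j <;>
    simp only [Fin.reduceFinMk, Fin.isValue, Fin.zero_eta, Fin.mk_one, Matrix.cons_val, ← hxx',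
      Prod.mk.injEq, Nat.lcm_self, Nat.lcm_one_right, orderOf_one, card_centralizer_one]
      at hij ⊢ <;>
    omega

end TrivialCenter

/-- If `H` is a finite nonabelian simple group and `k ≥ 2`, then the direct power
`H × ⋯ × H` (`k` factors) has at least 7 automorphism orbits. -/
theorem stmt_4 (H : Type*) [Group H] [Finite H] (hs : IsSimpleGroup H)
    (hna : ¬ ∀ a b : H, a * b = b * a) (k : ℕ) (hk : 2 ≤ k) :
    7 ≤ omegaAut (Fin k → H) := by
  obtain ⟨m, rfl⟩ : ∃ m, k = m + 2 := ⟨k - 2, by omega⟩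
  have hZ := center_eq_bot_of_isSimpleGroup hs hna
  obtain ⟨p, q, hp, hq, hpq, hpH, hqH⟩ := exists_two_primes_dvd_card hZ
  have := Fact.mk hp
  have := Fact.mk hq
  obtain ⟨x, hx⟩ := exists_prime_orderOf_dvd_card' p hpH
  obtain ⟨y, hy⟩ := exists_prime_orderOf_dvd_card' q hqH
  have hx1 : x ≠ 1 := fun h => hp.ne_one (by rw [← hx, h, orderOf_one])
  have hy1 : y ≠ 1 := fun h => hq.ne_one (by rw [← hy, h, orderOf_one])
  by_cases hA : ∃ z : H, orderOf z ≠ 1 ∧ orderOf z ≠ p ∧ orderOf z ≠ q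
  · obtain ⟨z, hz1, hzp, hzq⟩ := hA
    exact seven_le_omegaAut_of_three_orders hZ hx1 hy1 (mt orderOf_eq_one_iff.mpr hz1)
      (by rwa [hx, hy]) (by rwa [hx, ne_comm]) (by rwa [hy, ne_comm])
  obtain ⟨u, u', huu', hu, hlt⟩ :=
    exists_orderOf_eq_card_centralizer_lt hs hp hq hpq (by grind) hpH hqH
  rcases hu with hu | hu
  · exact seven_le_omegaAut_of_card_centralizer_lt hZ huu' hlt hy1 (by rwa [hu, hy])
  · exact seven_le_omegaAut_of_card_centralizer_lt hZ huu' hlt hx1 (by rwa [hu, hx, ne_comm])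
end

section
/- Let G be a nontrivial finite group and K a characteristic subgroup of G. Then ω(G) ≥ ω(K) + ω(G/K) − 1. -/
open scoped MatrixGroups

section aux
variable {G : Type*} [Group G] (K : Subgroup G) [K.Characteristic]

/-- Restriction of an automorphism to a characteristic subgroup. -/
noncomputable def autRestrict (φ : MulAut G) : MulAut K :=
  ((MulEquiv.subgroupMap (φ : G ≃* G) K).trans
    (MulEquiv.subgroupCongr (Subgroup.characteristic_iff_map_eq.mp ‹_› φ)))

@[simp] lemma autRestrict_apply (φ : MulAut G) (k : K) :
    (autRestrict K φ k : G) = φ (k : G) := rfl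

/-- Induced automorphism on the quotient. -/
noncomputable def autQuot (φ : MulAut G) : MulAut (G ⧸ K) :=
  QuotientGroup.congr K K (φ : G ≃* G) (Subgroup.characteristic_iff_map_eq.mp ‹_› φ)

@[simp] lemma autQuot_apply (φ : MulAut G) (g : G) :
    autQuot K φ (QuotientGroup.mk g) = QuotientGroup.mk (φ g) := rfl

lemma mem_of_apply_mem (φ : MulAut G) {x : G} (hx : φ x ∈ K) : x ∈ K := by
  have := Subgroup.characteristic_iff_comap_eq.mp ‹K.Characteristic› φ
  rw [← this]; exact hx

end aux

/-- For a nontrivial finite group `G` and a characteristic subgroup `K`,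
`ω(G) ≥ ω(K) + ω(G/K) - 1`. -/
theorem stmt_6 (G : Type*) [Group G] [Finite G] [Nontrivial G]
    (K : Subgroup G) [K.Characteristic] :
    omegaAut K + omegaAut (G ⧸ K) - 1 ≤ omegaAut G := by
  classical
  set QG := MulAction.orbitRel.Quotient (MulAut G) G with hQG
  set QK := MulAction.orbitRel.Quotient (MulAut K) K with hQK
  set QQ := MulAction.orbitRel.Quotient (MulAut (G ⧸ K)) (G ⧸ K) with hQQ
  let e : QQ := Quotient.mk'' (1 : G ⧸ K)
  let f : QK ⊕ {q : QQ // q ≠ e} → QG :=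
    fun x => match x with
    | Sum.inl q => Quotient.mk'' ((q.out : K) : G)
    | Sum.inr q => Quotient.mk'' (q.val.out.out : G)
  -- a helper: if the representative of a class in QQ lies in K, the class is e
  have key : ∀ q : QQ, (q.out.out : G) ∈ K → q = e := by
    intro q hq
    have h1 : (QuotientGroup.mk q.out.out : G ⧸ K) = 1 :=
      (QuotientGroup.eq_one_iff _).mpr hq
    have h2 : (QuotientGroup.mk q.out.out : G ⧸ K) = q.out := QuotientGroup.out_eq' _
    show q = Quotient.mk'' (1 : G ⧸ K)
    rw [← Quotient.out_eq' q, ← h2, h1]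
  have hf : Function.Injective f := by
    rintro (a | a) (b | b) h
    · replace h : (Quotient.mk'' ((a.out : K) : G) : QG)
          = Quotient.mk'' ((b.out : K) : G) := h
      have h2 := Quotient.eq''.mp h
      rw [MulAction.orbitRel_apply, MulAction.mem_orbit_iff] at h2
      obtain ⟨φ, hφ⟩ := h2
      congr 1
      rw [← Quotient.out_eq' a, ← Quotient.out_eq' b]
      apply Quotient.sound'
      rw [MulAction.orbitRel_apply, MulAction.mem_orbit_iff]
      refine ⟨autRestrict K φ, ?_⟩
      ext
      simpa [MulAut.smul_def] using hφ
    · exfalso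
      replace h : (Quotient.mk'' ((a.out : K) : G) : QG)
          = Quotient.mk'' (b.val.out.out : G) := h
      have h2 := Quotient.eq''.mp h
      rw [MulAction.orbitRel_apply, MulAction.mem_orbit_iff] at h2
      obtain ⟨φ, hφ⟩ := h2
      apply b.property
      apply key
      apply mem_of_apply_mem K φ
      rw [show φ (b.val.out.out : G) = φ • (b.val.out.out : G) from rfl, hφ]
      exact (a.out).2
    · exfalso
      replace h : (Quotient.mk'' (a.val.out.out : G) : QG)
          = Quotient.mk'' ((b.out : K) : G) := h
      have h2 := Quotient.eq''.mp h
      rw [MulAction.orbitRel_apply, MulAction.mem_orbit_iff] at h2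
      obtain ⟨φ, hφ⟩ := h2
      apply a.property
      apply key
      rw [← hφ, show φ • ((b.out : K) : G) = φ ((b.out : K) : G) from rfl]
      have hm : φ ((b.out : K) : G) ∈ K.map (φ : G ≃* G).toMonoidHom :=
        Subgroup.mem_map_of_mem _ (b.out).2
      rwa [Subgroup.characteristic_iff_map_eq.mp ‹K.Characteristic› φ] at hm
    · replace h : (Quotient.mk'' (a.val.out.out : G) : QG)
          = Quotient.mk'' (b.val.out.out : G) := h
      have h2 := Quotient.eq''.mp h
      rw [MulAction.orbitRel_apply, MulAction.mem_orbit_iff] at h2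
      obtain ⟨φ, hφ⟩ := h2
      congr 1
      apply Subtype.ext
      rw [← Quotient.out_eq' a.val, ← Quotient.out_eq' b.val]
      apply Quotient.sound'
      rw [MulAction.orbitRel_apply, MulAction.mem_orbit_iff]
      refine ⟨autQuot K φ, ?_⟩
      rw [← QuotientGroup.out_eq' a.val.out, ← QuotientGroup.out_eq' b.val.out,
        MulAut.smul_def, autQuot_apply]
      rw [show φ (b.val.out.out : G) = φ • (b.val.out.out : G) from rfl, hφ]
  have hcard := Nat.card_le_card_of_injective f hf
  rw [Nat.card_sum] at hcard
  have hsplit : Nat.card QQ = Nat.card {q : QQ // q = e} + Nat.card {q : QQ // q ≠ e} := by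
    rw [← Nat.card_sum]
    exact Nat.card_congr (Equiv.sumCompl (· = e)).symm
  have hone : Nat.card {q : QQ // q = e} = 1 := by
    haveI : Unique {q : QQ // q = e} := ⟨⟨⟨e, rfl⟩⟩, fun x => Subtype.ext x.2⟩
    exact Nat.card_unique
  rw [hone] at hsplit
  show Nat.card QK + Nat.card QQ - 1 ≤ Nat.card QG
  omega
end

section
/- Let p be an odd prime and let G be a finite group with a nontrivial normal elementary abelian p-subgroup N such that G/N is isomorphic to A₅. Then G contains an element of order 2p, and consequently ω(G) ≥ 6. -/
set_option linter.unusedSectionVars false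
set_option linter.unusedVariables false
set_option maxHeartbeats 4000000

open scoped MatrixGroups

section Aux
variable {G : Type*} [Group G] {N : Subgroup G} [N.Normal] {p : ℕ}

private lemma solve123 {M : Type*} [Group M] {X Y Z : M} (h : X * Y * Z = 1) :
    Y = X⁻¹ * Z⁻¹ := by
  have h2 : Y = X⁻¹ * (X * Y * Z) * Z⁻¹ := by group
  rw [h] at h2; simpa using h2

private lemma calcPQW {M : Type*} [CommGroup M] (P Q W n : M)
    (h : W⁻¹ * Q⁻¹ *
        ((((P⁻¹ * n⁻¹)⁻¹ * P⁻¹)⁻¹ * (P⁻¹ * n⁻¹)⁻¹)⁻¹ *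
          ((W⁻¹ * Q⁻¹)⁻¹ * (P⁻¹ * n⁻¹)⁻¹)⁻¹) * n = 1) :
    (P * Q * W) * (P * Q * W) = 1 := by
  have h2 : (P * Q * W) * (P * Q * W) =
      (W⁻¹ * Q⁻¹ *
        ((((P⁻¹ * n⁻¹)⁻¹ * P⁻¹)⁻¹ * (P⁻¹ * n⁻¹)⁻¹)⁻¹ *
          ((W⁻¹ * Q⁻¹)⁻¹ * (P⁻¹ * n⁻¹)⁻¹)⁻¹) * n)⁻¹ := by
    simp [mul_comm, mul_left_comm, mul_assoc]
  rw [h2, h, inv_one]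

private lemma calcBA {M : Type*} [CommGroup M] (P Q W n : M) (h : P * Q * W = 1) :
    (W⁻¹ * P⁻¹)⁻¹ * (Q⁻¹ * n⁻¹)⁻¹ = n := by
  have h2 : (W⁻¹ * P⁻¹)⁻¹ * (Q⁻¹ * n⁻¹)⁻¹ = (P * Q * W) * n := by
    simp [mul_comm, mul_left_comm, mul_assoc]
  rw [h2, h, one_mul]

private lemma pow_rp_eq_one (hexp : ∀ g : N, g ^ p = 1) {r : ℕ} {x : G} (hx : x ^ r ∈ N) :
    x ^ (r * p) = 1 := by
  have h := congrArg (Subtype.val) (hexp ⟨x ^ r, hx⟩)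
  simpa [pow_mul] using h

private lemma dvd_cases {r d : ℕ} (hp : p.Prime) (hr : 0 < r) (h1 : d ∣ r * p) (h2 : r ∣ d) :
    d = r ∨ d = r * p := by
  obtain ⟨m, rfl⟩ := h2
  have hm : m ∣ p := (Nat.mul_dvd_mul_iff_left hr).mp h1
  rcases hp.eq_one_or_self_of_dvd m hm with h | h <;> simp [h]

private lemma order_of_preimage (hp : p.Prime) (hexp : ∀ g : N, g ^ p = 1)
    {r : ℕ} (hr : r.Prime) {x : G}
    (hx : ((x : G ⧸ N)) ^ r = 1) (hx1 : (x : G ⧸ N) ≠ 1) :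
    orderOf x = r ∨ orderOf x = r * p := by
  haveI := Fact.mk hr
  have hmem : x ^ r ∈ N := by
    rw [← QuotientGroup.eq_one_iff]
    simpa using hx
  have h1 : orderOf x ∣ r * p := orderOf_dvd_of_pow_eq_one (pow_rp_eq_one hexp hmem)
  have h2 : r ∣ orderOf x := by
    have ho : orderOf ((x : G ⧸ N)) = r := orderOf_eq_prime hx hx1
    rw [← ho]
    exact orderOf_map_dvd (QuotientGroup.mk' N) x
  exact dvd_cases hp hr.pos h1 h2

private lemma sq_eq_one_eq_one (hp : p.Prime) (hodd : p ≠ 2)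
    (hexp : ∀ g : N, g ^ p = 1) {n : N} (h : n * n = 1) : (n : N) = 1 := by
  have h1 : orderOf n ∣ 2 := orderOf_dvd_of_pow_eq_one (by rw [pow_two]; exact h)
  have h2 : orderOf n ∣ p := orderOf_dvd_of_pow_eq_one (hexp n)
  have h3 : orderOf n ∣ Nat.gcd 2 p := Nat.dvd_gcd h1 h2
  have hc : Nat.gcd 2 p = 1 := (Nat.coprime_primes Nat.prime_two hp).mpr (Ne.symm hodd)
  rw [hc, Nat.dvd_one] at h3
  exact orderOf_eq_one_iff.mp h3

private lemma exists_orderOf_odd_mul (hp : p.Prime) (hodd : p ≠ 2)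
    (hab : ∀ a b : N, a * b = b * a) (hexp : ∀ g : N, g ^ p = 1)
    (n₀ : N) (hn₀p : orderOf (n₀ : G) = p)
    (a b : G ⧸ N) (ha3 : a ^ 3 = 1) (ha1 : a ≠ 1) (hb3 : b ^ 3 = 1) (hb1 : b ≠ 1)
    (hab2 : (a * b) ^ 2 = 1) (hd3 : (a * a * b) ^ 3 = 1) (hd1 : a * a * b ≠ 1)
    (hba1 : b * a ≠ 1) [IsSimpleGroup (G ⧸ N)]
    (y : ℕ) (hy : y.Prime) (hyp : y ≠ p) (w : G) (hw : orderOf w = y) :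
    ∃ g : G, orderOf g = 3 * p ∨ orderOf g = y * p := by
  -- dichotomy for preimages of cube roots
  have key : ∀ u : G ⧸ N, u ^ 3 = 1 → u ≠ 1 →
      (∃ g : G, orderOf g = 3 * p) ∨
      ∃ x : G, ((x : G ⧸ N) = u) ∧ x ^ 3 = 1 ∧
        ∀ n : N, (x * (n : G) * x⁻¹) * (x * x * (n : G) * x⁻¹ * x⁻¹) * (n : G) = 1 := by
    intro u hu3 hu1
    obtain ⟨x, rfl⟩ := QuotientGroup.mk_surjective u
    by_cases hcase : ∃ n : N, orderOf (x * (n : G)) = 3 * p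
    · left
      obtain ⟨n, hn⟩ := hcase
      exact ⟨x * n, hn⟩
    · right
      push_neg at hcase
      have hall : ∀ n : N, orderOf (x * (n : G)) = 3 := by
        intro n
        have hmkn : ((x * (n : G) : G) : G ⧸ N) = ((x : G ⧸ N)) := by
          simp [QuotientGroup.eq_one_iff, n.2]
        rcases order_of_preimage hp hexp Nat.prime_three
            (by rw [hmkn]; exact hu3) (by rw [hmkn]; exact hu1) with h | h
        · exact h
        · exact absurd h (hcase n)
      have hx3 : x ^ 3 = 1 := by
        have h := hall 1
        simp only [OneMemClass.coe_one, mul_one] at h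
        rw [← h]; exact pow_orderOf_eq_one x
      refine ⟨x, rfl, hx3, fun n => ?_⟩
      have hcube : (x * (n : G)) ^ 3 = 1 := by
        rw [← hall n]; exact pow_orderOf_eq_one _
      calc (x * (n : G) * x⁻¹) * (x * x * (n : G) * x⁻¹ * x⁻¹) * (n : G)
          = x * (n : G) * x * (n : G) * (x ^ 3)⁻¹ * x * (n : G) := by group
        _ = (x * (n : G)) ^ 3 := by rw [hx3, pow_succ, pow_succ, pow_one]; group
        _ = 1 := hcube
  rcases key a ha3 ha1 with h | ⟨x, hmkx, hx3, hQxG⟩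
  · obtain ⟨g, hg⟩ := h; exact ⟨g, Or.inl hg⟩
  rcases key b hb3 hb1 with h | ⟨z, hmkz, hz3, hQzG⟩
  · obtain ⟨g, hg⟩ := h; exact ⟨g, Or.inl hg⟩
  rcases key (a * a * b) hd3 hd1 with h | ⟨d, hmkd, hd3', hQdG⟩
  · obtain ⟨g, hg⟩ := h; exact ⟨g, Or.inl hg⟩
  -- pass to automorphisms of N
  set A : MulAut N := MulAut.conjNormal x with hA_def
  set B : MulAut N := MulAut.conjNormal z with hB_def
  have coeA : ∀ n : N, ((A n : N) : G) = x * n * x⁻¹ := fun n => MulAut.conjNormal_apply x n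
  have coeB : ∀ n : N, ((B n : N) : G) = z * n * z⁻¹ := fun n => MulAut.conjNormal_apply z n
  have hQa : ∀ n : N, A n * A (A n) * n = 1 := by
    intro n
    apply Subtype.ext
    simp only [Subgroup.coe_mul, coeA, OneMemClass.coe_one]
    rw [← hQxG n]; group
  have hQb : ∀ n : N, B n * B (B n) * n = 1 := by
    intro n
    apply Subtype.ext
    simp only [Subgroup.coe_mul, coeB, OneMemClass.coe_one]
    rw [← hQzG n]; group
  have hQd0 : ∀ n : N, MulAut.conjNormal d n * MulAut.conjNormal d (MulAut.conjNormal d n) * n = 1 := by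
    intro n
    apply Subtype.ext
    simp only [Subgroup.coe_mul, MulAut.conjNormal_apply, OneMemClass.coe_one]
    rw [← hQdG n]; group
  have hmem_m : (x * x * z)⁻¹ * d ∈ N := by
    rw [← QuotientGroup.eq_one_iff]
    simp only [QuotientGroup.mk_mul, QuotientGroup.mk_inv, hmkx, hmkz, hmkd]
    group
  have hconv : ∀ n : N, MulAut.conjNormal d n = A (A (B n)) := by
    intro n
    have hmn : ((x * x * z)⁻¹ * d) * (n : G) * ((x * x * z)⁻¹ * d)⁻¹ = (n : G) := by
      have hc := hab ⟨_, hmem_m⟩ n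
      have hc' := congrArg (Subtype.val) hc
      simp only [Subgroup.coe_mul] at hc'
      rw [hc']; group
    apply Subtype.ext
    simp only [MulAut.conjNormal_apply, coeA, coeB]
    conv_rhs => rw [← hmn]
    group
  have hQd1 : ∀ n : N, A (A (B n)) * A (A (B (A (A (B n))))) * n = 1 := by
    intro n
    have h := hQd0 n
    rw [hconv n, hconv (A (A (B n)))] at h
    exact h
  have hmem2 : (x * z) * (x * z) ∈ N := by
    rw [← QuotientGroup.eq_one_iff]
    have hq : (((x * z) * (x * z) : G) : G ⧸ N) = (a * b) ^ 2 := by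
      simp only [QuotientGroup.mk_mul, hmkx, hmkz, pow_two]
    rw [hq, hab2]
  have hR : ∀ n : N, A (B (A (B n))) = n := by
    intro n
    have hmn : ((x * z) * (x * z)) * (n : G) * ((x * z) * (x * z))⁻¹ = (n : G) := by
      have hc := hab ⟨_, hmem2⟩ n
      have hc' := congrArg (Subtype.val) hc
      simp only [Subgroup.coe_mul] at hc'
      rw [hc']; group
    apply Subtype.ext
    simp only [coeA, coeB]
    conv_rhs => rw [← hmn]
    group
  -- commutative group structure on N
  letI : CommGroup N := { (inferInstance : Group N) with mul_comm := hab }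
  have hA2 : ∀ n : N, A (A n) = (A n)⁻¹ * n⁻¹ := fun n => solve123 (hQa n)
  have hB2 : ∀ n : N, B (B n) = (B n)⁻¹ * n⁻¹ := fun n => solve123 (hQb n)
  have hA3 : ∀ n : N, A (A (A n)) = n := by
    intro n; rw [hA2 (A n), hA2 n]; group
  have hB3 : ∀ n : N, B (B (B n)) = n := by
    intro n; rw [hB2 (B n), hB2 n]; group
  have hL3 : ∀ n : N, B (A n) = A (A (B (B n))) := by
    intro n
    have h := hR (B (B n))
    rw [hB3 n] at h
    calc B (A n) = A (A (A (B (A n)))) := (hA3 _).symm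
      _ = A (A (B (B n))) := by rw [h]
  have hL4 : ∀ n : N, B (A (B n)) = A (A n) := by
    intro n; rw [hL3 (B n), hB3 n]
  have hsq : ∀ n : N, (A n * B n * A (B n)) * (A n * B n * A (B n)) = 1 := by
    intro n
    have h := hQd1 n
    simp only [hA2, map_mul, map_inv, hB2, hL4, hA3, hB3] at h
    exact calcPQW (A n) (B n) (A (B n)) n h
  have hPQW : ∀ n : N, A n * B n * A (B n) = 1 := fun n =>
    sq_eq_one_eq_one hp hodd hexp (hsq n)
  have hBA : ∀ n : N, B (A n) = n := by
    intro n
    rw [hL3 n, hB2 n, hA2]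
    simp only [map_mul, map_inv]
    exact calcBA (A n) (B n) (A (B n)) n (hPQW n)
  -- conjugation action is trivial, hence N is central
  have hker : N ≤ (MulAut.conjNormal : G →* MulAut N).ker := by
    intro m hm
    rw [MonoidHom.mem_ker]
    ext n
    simp only [MulAut.conjNormal_apply, MulAut.one_apply]
    have hc := hab ⟨m, hm⟩ n
    have hc' := congrArg Subtype.val hc
    simp only [Subgroup.coe_mul] at hc'
    rw [hc']; group
  set φ := QuotientGroup.lift N (MulAut.conjNormal : G →* MulAut N) hker with hφ_def
  have hφba : φ (b * a) = 1 := by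
    have hmkzx : ((z * x : G) : G ⧸ N) = b * a := by
      simp only [QuotientGroup.mk_mul, hmkx, hmkz]
    rw [← hmkzx, hφ_def, QuotientGroup.lift_mk]
    ext n
    simp only [MulAut.conjNormal_apply, MulAut.one_apply]
    have h := congrArg Subtype.val (hBA n)
    simp only [coeA, coeB] at h
    conv_rhs => rw [← h]
    group
  have hkerne : φ.ker ≠ ⊥ := by
    intro hbot
    have hmem : b * a ∈ φ.ker := by rw [MonoidHom.mem_ker]; exact hφba
    rw [hbot, Subgroup.mem_bot] at hmem
    exact hba1 hmem
  have hkertop : φ.ker = ⊤ := ((MonoidHom.normal_ker φ).eq_bot_or_eq_top).resolve_left hkerne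
  have hcent : w * (n₀ : G) * w⁻¹ = (n₀ : G) := by
    have hmem : ((w : G) : G ⧸ N) ∈ φ.ker := hkertop ▸ Subgroup.mem_top _
    rw [MonoidHom.mem_ker, hφ_def, QuotientGroup.lift_mk] at hmem
    have h := congrArg (fun ψ : MulAut N => ((ψ n₀ : N) : G)) hmem
    simpa [MulAut.conjNormal_apply] using h
  have hcomm : Commute w (n₀ : G) := by
    have : w * (n₀ : G) = (n₀ : G) * w := by
      conv_rhs => rw [← hcent]
      group
    exact this
  refine ⟨w * (n₀ : G), Or.inr ?_⟩
  rw [hcomm.orderOf_mul_eq_mul_orderOf_of_coprime]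
  · rw [hw, hn₀p]
  · rw [hw, hn₀p]
    exact (Nat.coprime_primes hy hp).mpr hyp

private lemma exists_orderOf_two_mul (hp : p.Prime) (hodd : p ≠ 2)
    (hab : ∀ a b : N, a * b = b * a) (hexp : ∀ g : N, g ^ p = 1)
    (n₀ : N) (hn₀p : orderOf (n₀ : G) = p)
    (s t : G ⧸ N) (hs2 : s ^ 2 = 1) (hs1 : s ≠ 1) (ht2 : t ^ 2 = 1) (ht1 : t ≠ 1)
    (hst2 : (s * t) ^ 2 = 1) (hst1 : s * t ≠ 1) :
    ∃ g : G, orderOf g = 2 * p := by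
  have key : ∀ u : G ⧸ N, u ^ 2 = 1 → u ≠ 1 →
      (∃ g : G, orderOf g = 2 * p) ∨
      ∃ x : G, ((x : G ⧸ N) = u) ∧ x ^ 2 = 1 ∧ ∀ n : N, x * n * x⁻¹ = (n : G)⁻¹ := by
    intro u hu2 hu1
    obtain ⟨x, rfl⟩ := QuotientGroup.mk_surjective u
    by_cases hcase : ∃ n : N, orderOf (x * (n : G)) = 2 * p
    · left
      obtain ⟨n, hn⟩ := hcase
      exact ⟨x * n, hn⟩
    · right
      push_neg at hcase
      have hall : ∀ n : N, orderOf (x * (n : G)) = 2 := by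
        intro n
        have hmkn : ((x * (n : G) : G) : G ⧸ N) = ((x : G ⧸ N)) := by
          simp [QuotientGroup.eq_one_iff, n.2]
        rcases order_of_preimage hp hexp Nat.prime_two
            (by rw [hmkn]; exact hu2) (by rw [hmkn]; exact hu1) with h | h
        · exact h
        · exact absurd h (hcase n)
      have hx2 : x ^ 2 = 1 := by
        have h := hall 1
        simp only [OneMemClass.coe_one, mul_one] at h
        rw [← h]; exact pow_orderOf_eq_one x
      refine ⟨x, rfl, hx2, ?_⟩
      intro n
      have h2 : (x * (n : G)) * (x * (n : G)) = 1 := by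
        have := hall n
        have h' := pow_orderOf_eq_one (x * (n : G))
        rw [this, pow_two] at h'
        exact h'
      have hxinv : x⁻¹ = x := by
        rw [inv_eq_iff_mul_eq_one, ← pow_two]; exact hx2
      have h3 : x * (n : G) * x = ((n : G))⁻¹ := by
        have h4 : (x * (n : G) * x) * (n : G) = 1 := by
          calc (x * (n : G) * x) * (n : G) = (x * (n : G)) * (x * (n : G)) := by group
            _ = 1 := h2
        exact eq_inv_of_mul_eq_one_left h4
      rw [hxinv]; exact h3
  rcases key s hs2 hs1 with h | ⟨x, hmkx, hx2, hxinv⟩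
  · exact h
  rcases key t ht2 ht1 with h | ⟨y, hmky, hy2, hyinv⟩
  · exact h
  have hmkz : (((x * y : G)) : G ⧸ N) = s * t := by
    simp [hmkx, hmky]
  rcases order_of_preimage hp hexp Nat.prime_two
      (by rw [hmkz]; exact hst2) (by rw [hmkz]; exact hst1) with hz2 | hz2p
  swap
  · exact ⟨x * y, hz2p⟩
  -- z has order 2 and centralizes n₀
  have hcent : (x * y) * (n₀ : G) * (x * y)⁻¹ = (n₀ : G) := by
    calc (x * y) * (n₀ : G) * (x * y)⁻¹ = x * (y * (n₀ : G) * y⁻¹) * x⁻¹ := by group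
      _ = x * ((n₀⁻¹ : N) : G) * x⁻¹ := by rw [hyinv n₀]; norm_cast
      _ = (((n₀⁻¹ : N) : G))⁻¹ := hxinv n₀⁻¹
      _ = (n₀ : G) := by norm_cast; simp
  have hcomm : Commute (x * y) (n₀ : G) := by
    have : (x * y) * (n₀ : G) = (n₀ : G) * (x * y) := by
      conv_rhs => rw [← hcent]
      group
    exact this
  refine ⟨(x * y) * (n₀ : G), ?_⟩
  rw [hcomm.orderOf_mul_eq_mul_orderOf_of_coprime]
  · rw [hz2, hn₀p]
  · rw [hz2, hn₀p]
    exact (Nat.coprime_primes Nat.prime_two hp).mpr (Ne.symm hodd)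


private lemma six_le_card_orbits {G : Type*} [Group G] [Finite G] (f : Fin 6 → G)
    (v : Fin 6 → ℕ) (hv : ∀ i, orderOf (f i) = v i) (hinjv : Function.Injective v) :
    6 ≤ Nat.card (MulAction.orbitRel.Quotient (MulAut G) G) := by
  have hinj : Function.Injective fun i => orderOf (f i) := by
    intro i j hij
    apply hinjv
    rw [← hv i, ← hv j]
    exact hij
  haveI : Finite (MulAction.orbitRel.Quotient (MulAut G) G) := Quotient.finite _
  have hinj2 : Function.Injective
      (fun i => (Quotient.mk'' (f i) : MulAction.orbitRel.Quotient (MulAut G) G)) := by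
    intro i j hij
    apply hinj
    have hrel : MulAction.orbitRel (MulAut G) G (f i) (f j) := Quotient.eq''.mp hij
    rw [MulAction.orbitRel_apply] at hrel
    obtain ⟨ψ, hψ⟩ := MulAction.mem_orbit_iff.mp hrel
    show orderOf (f i) = orderOf (f j)
    rw [← hψ, MulAut.smul_def]
    exact orderOf_injective ψ.toMonoidHom ψ.injective (f j)
  calc (6 : ℕ) = Nat.card (Fin 6) := by simp
    _ ≤ _ := Nat.card_le_card_of_injective _ hinj2

end Aux

/-- If `p` is an odd prime and `G` is a finite group with a nontrivial normal
elementary abelian `p`-subgroup `N` such that `G/N ≃ A₅`, then `G` contains an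
element of order `2p` and `ω(G) ≥ 6`. -/
theorem stmt_12 (p : ℕ) (hp : p.Prime) (hodd : p ≠ 2)
    (G : Type*) [Group G] [Finite G] (N : Subgroup G) [N.Normal] (hnt : N ≠ ⊥)
    (hab : ∀ a b : N, a * b = b * a) (hexp : ∀ g : N, g ^ p = 1)
    (hquot : Nonempty ((G ⧸ N) ≃* alternatingGroup (Fin 5))) :
    (∃ g : G, orderOf g = 2 * p) ∧ 6 ≤ omegaAut G := by
  obtain ⟨e⟩ := hquot
  haveI := Fact.mk hp
  -- explicit elements of the alternating group
  have hmem_s : (Equiv.swap 0 1 * Equiv.swap 2 3 : Equiv.Perm (Fin 5)) ∈ alternatingGroup (Fin 5) := by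
    rw [Equiv.Perm.mem_alternatingGroup]; decide
  have hmem_t : (Equiv.swap 0 2 * Equiv.swap 1 3 : Equiv.Perm (Fin 5)) ∈ alternatingGroup (Fin 5) := by
    rw [Equiv.Perm.mem_alternatingGroup]; decide
  have hmem_a : (Equiv.swap 0 1 * Equiv.swap 1 2 : Equiv.Perm (Fin 5)) ∈ alternatingGroup (Fin 5) := by
    rw [Equiv.Perm.mem_alternatingGroup]; decide
  have hmem_b : (Equiv.swap 0 1 * Equiv.swap 1 3 : Equiv.Perm (Fin 5)) ∈ alternatingGroup (Fin 5) := by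
    rw [Equiv.Perm.mem_alternatingGroup]; decide
  set sP : alternatingGroup (Fin 5) := ⟨_, hmem_s⟩ with hsP_def
  set tP : alternatingGroup (Fin 5) := ⟨_, hmem_t⟩ with htP_def
  set aP : alternatingGroup (Fin 5) := ⟨_, hmem_a⟩ with haP_def
  set bP : alternatingGroup (Fin 5) := ⟨_, hmem_b⟩ with hbP_def
  have hsP2 : sP ^ 2 = 1 := by
    apply Subtype.ext; simp only [SubmonoidClass.coe_pow, OneMemClass.coe_one, hsP_def]; decide
  have hsP1 : sP ≠ 1 := by
    intro h; have h2 := congrArg Subtype.val h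
    simp only [OneMemClass.coe_one, hsP_def] at h2
    exact absurd h2 (by decide)
  have htP2 : tP ^ 2 = 1 := by
    apply Subtype.ext; simp only [SubmonoidClass.coe_pow, OneMemClass.coe_one, htP_def]; decide
  have htP1 : tP ≠ 1 := by
    intro h; have h2 := congrArg Subtype.val h
    simp only [OneMemClass.coe_one, htP_def] at h2
    exact absurd h2 (by decide)
  have hstP2 : (sP * tP) ^ 2 = 1 := by
    apply Subtype.ext
    simp only [SubmonoidClass.coe_pow, Subgroup.coe_mul, OneMemClass.coe_one, hsP_def, htP_def]
    decide
  have hstP1 : sP * tP ≠ 1 := by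
    intro h; have h2 := congrArg Subtype.val h
    simp only [Subgroup.coe_mul, OneMemClass.coe_one, hsP_def, htP_def] at h2
    exact absurd h2 (by decide)
  have haP3 : aP ^ 3 = 1 := by
    apply Subtype.ext; simp only [SubmonoidClass.coe_pow, OneMemClass.coe_one, haP_def]; decide
  have haP1 : aP ≠ 1 := by
    intro h; have h2 := congrArg Subtype.val h
    simp only [OneMemClass.coe_one, haP_def] at h2
    exact absurd h2 (by decide)
  have hbP3 : bP ^ 3 = 1 := by
    apply Subtype.ext; simp only [SubmonoidClass.coe_pow, OneMemClass.coe_one, hbP_def]; decide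
  have hbP1 : bP ≠ 1 := by
    intro h; have h2 := congrArg Subtype.val h
    simp only [OneMemClass.coe_one, hbP_def] at h2
    exact absurd h2 (by decide)
  have habP2 : (aP * bP) ^ 2 = 1 := by
    apply Subtype.ext
    simp only [SubmonoidClass.coe_pow, Subgroup.coe_mul, OneMemClass.coe_one, haP_def, hbP_def]
    decide
  have hdP3 : (aP * aP * bP) ^ 3 = 1 := by
    apply Subtype.ext
    simp only [SubmonoidClass.coe_pow, Subgroup.coe_mul, OneMemClass.coe_one, haP_def, hbP_def]
    decide
  have hdP1 : aP * aP * bP ≠ 1 := by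
    intro h; have h2 := congrArg Subtype.val h
    simp only [Subgroup.coe_mul, OneMemClass.coe_one, haP_def, hbP_def] at h2
    exact absurd h2 (by decide)
  have hbaP1 : bP * aP ≠ 1 := by
    intro h; have h2 := congrArg Subtype.val h
    simp only [Subgroup.coe_mul, OneMemClass.coe_one, haP_def, hbP_def] at h2
    exact absurd h2 (by decide)
  -- transfer to the quotient
  have etransfer_pow : ∀ (u : alternatingGroup (Fin 5)) (k : ℕ), u ^ k = 1 → (e.symm u) ^ k = 1 := by
    intro u k hu
    rw [← map_pow, hu, map_one]
  have etransfer_ne : ∀ (u : alternatingGroup (Fin 5)), u ≠ 1 → e.symm u ≠ 1 := by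
    intro u hu h
    exact hu (e.symm.injective (h.trans (map_one e.symm).symm))
  -- simplicity of the quotient
  haveI : Nontrivial (G ⧸ N) := ⟨⟨e.symm aP, 1, etransfer_ne aP haP1⟩⟩
  haveI : IsSimpleGroup (G ⧸ N) :=
    IsSimpleGroup.isSimpleGroup_of_surjective e.symm.toMonoidHom e.symm.surjective
  -- cardinalities
  have hcardA : Nat.card (alternatingGroup (Fin 5)) = 60 := by
    rw [Nat.card_eq_fintype_card]
    have h2 := two_mul_card_alternatingGroup (α := Fin 5)
    have h3 : Fintype.card (Equiv.Perm (Fin 5)) = 120 := by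
      simp [Fintype.card_perm]; rfl
    omega
  have hcardQ : Nat.card (G ⧸ N) = 60 := by
    rw [Nat.card_congr e.toEquiv, hcardA]
  have hdvdG : 60 ∣ Nat.card G := by
    rw [Subgroup.card_eq_card_quotient_mul_card_subgroup N, hcardQ]
    exact Dvd.intro _ rfl
  -- the element of order p
  obtain ⟨n₀, hn₀⟩ := Subgroup.ne_bot_iff_exists_ne_one.mp hnt
  have hn₀p : orderOf (n₀ : G) = p := by
    have hpow : (n₀ : G) ^ p = 1 := by
      have h := congrArg Subtype.val (hexp n₀)
      simpa using h
    exact orderOf_eq_prime hpow (by simpa using hn₀)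
  -- element of order 2
  haveI := Fact.mk Nat.prime_two
  obtain ⟨g2, hg2⟩ := exists_prime_orderOf_dvd_card' 2 (dvd_trans ⟨30, rfl⟩ hdvdG)
  -- element of prime order y ∈ {3,5}, y ≠ p
  set y : ℕ := if p = 3 then 5 else 3 with hy_def
  have hyprime : y.Prime := by
    rw [hy_def]; split_ifs <;> norm_num
  have hyp : y ≠ p := by
    rw [hy_def]; split_ifs with h <;> omega
  have hy35 : y = 3 ∨ y = 5 := by
    rw [hy_def]; split_ifs <;> simp
  have hydvd : y ∣ Nat.card G := by
    refine dvd_trans ?_ hdvdG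
    rcases hy35 with h | h <;> rw [h] <;> norm_num
  haveI := Fact.mk hyprime
  obtain ⟨w, hw⟩ := exists_prime_orderOf_dvd_card' y hydvd
  -- element of order 2p
  have h2p : ∃ g : G, orderOf g = 2 * p :=
    exists_orderOf_two_mul hp hodd hab hexp n₀ hn₀p (e.symm sP) (e.symm tP)
      (etransfer_pow sP 2 hsP2) (etransfer_ne sP hsP1)
      (etransfer_pow tP 2 htP2) (etransfer_ne tP htP1)
      (by rw [← map_mul]; exact etransfer_pow _ 2 hstP2)
      (by rw [← map_mul]; exact etransfer_ne _ hstP1)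
  obtain ⟨g2p, hg2p⟩ := h2p
  -- element of order 3p or yp
  have hodd3 : ∃ g : G, orderOf g = 3 * p ∨ orderOf g = y * p :=
    exists_orderOf_odd_mul hp hodd hab hexp n₀ hn₀p (e.symm aP) (e.symm bP)
      (etransfer_pow aP 3 haP3) (etransfer_ne aP haP1)
      (etransfer_pow bP 3 hbP3) (etransfer_ne bP hbP1)
      (by rw [← map_mul]; exact etransfer_pow _ 2 habP2)
      (by rw [← map_mul, ← map_mul]; exact etransfer_pow _ 3 hdP3)
      (by rw [← map_mul, ← map_mul]; exact etransfer_ne _ hdP1)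
      (by rw [← map_mul]; exact etransfer_ne _ hbaP1)
      y hyprime hyp w hw
  obtain ⟨gX, hgX⟩ := hodd3
  refine ⟨⟨g2p, hg2p⟩, ?_⟩
  -- six elements of pairwise distinct orders
  have hp3 : 3 ≤ p := by
    have := hp.two_le; omega
  have hpodd : p % 2 = 1 := Nat.odd_iff.mp (hp.odd_of_ne_two hodd)
  set f : Fin 6 → G := ![1, g2, w, (n₀ : G), g2p, gX] with hf_def
  set v : Fin 6 → ℕ := fun i =>
    if i.val = 0 then 1 else if i.val = 1 then 2 else if i.val = 2 then y
    else if i.val = 3 then p else if i.val = 4 then 2 * p else orderOf gX with hv_def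
  have hv : ∀ i, orderOf (f i) = v i := by
    intro i
    fin_cases i
    · exact orderOf_one
    · exact hg2
    · exact hw
    · exact hn₀p
    · exact hg2p
    · rfl
  have hinjv : Function.Injective v := by
    intro i j h
    apply Fin.ext
    have hi := i.isLt
    have hj := j.isLt
    simp only [hv_def] at h
    rcases hy35 with hy' | hy'
    · rcases hgX with hX | hX
      · split_ifs at h
        all_goals omega
      · rw [hy'] at hX
        split_ifs at h
        all_goals omega
    · rcases hgX with hX | hX
      · split_ifs at h
        all_goals omega
      · rw [hy'] at hX
        split_ifs at h
        all_goals omega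
  show 6 ≤ Nat.card (MulAction.orbitRel.Quotient (MulAut G) G)
  exact six_le_card_orbits f v hv hinjv
end

section
/- A nontrivial finite group G satisfies ω(G) = 2 if and only if G is an elementary abelian p-group for some prime p. -/
/-!
The identity is fixed by every automorphism, so `ω(G) = 2` says exactly that `Aut G` acts
transitively on `G \ {1}`. Then all nontrivial elements share the order of an element of prime
order `p`, so `G` has exponent `p`; and the centre, a characteristic subgroup that is nontrivial
because `G` is a `p`-group, must be all of `G`. Conversely an elementary abelian `p`-group is a
vector space over `ZMod p`, and `GL` of a vector space is transitive on nonzero vectors.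
-/

open scoped MatrixGroups

open MulAction

theorem MulAction.card_orbitRel_quotient_eq_two_iff {M α : Type*} [Group M] [MulAction M α]
    {x₀ : α} (hx₀ : ∀ m : M, m • x₀ = x₀) {a₀ : α} (ha₀ : a₀ ≠ x₀) :
    Nat.card (orbitRel.Quotient M α) = 2 ↔
      ∀ a b : α, a ≠ x₀ → b ≠ x₀ → ∃ m : M, m • a = b := by
  have mk_eq_mk {a b : α} :
      (⟦a⟧ : orbitRel.Quotient M α) = ⟦b⟧ ↔ ∃ m : M, m • b = a :=
    Quotient.eq.trans (orbitRel_apply.trans mem_orbit_iff)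
  have mk_eq_mk_fixed {a : α} : (⟦a⟧ : orbitRel.Quotient M α) = ⟦x₀⟧ ↔ a = x₀ := by
    simp [mk_eq_mk, hx₀, eq_comm]
  rw [Nat.card_eq_two_iff' ⟦x₀⟧]
  constructor
  · rintro ⟨q, -, hq⟩ a b ha hb
    have hab : (⟦b⟧ : orbitRel.Quotient M α) = ⟦a⟧ :=
      (hq _ (mt mk_eq_mk_fixed.mp hb)).trans (hq _ (mt mk_eq_mk_fixed.mp ha)).symm
    exact mk_eq_mk.mp hab
  · intro htrans
    refine ⟨⟦a₀⟧, mt mk_eq_mk_fixed.mp ha₀, fun q hq => ?_⟩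
    induction q using Quotient.inductionOn with
    | h c => exact mk_eq_mk.mpr (htrans a₀ c ha₀ (mt mk_eq_mk_fixed.mpr hq))

theorem omegaAut_eq_two_iff (G : Type*) [Group G] [Nontrivial G] :
    omegaAut G = 2 ↔ ∀ a b : G, a ≠ 1 → b ≠ 1 → ∃ φ : MulAut G, φ a = b := by
  obtain ⟨g, hg⟩ := exists_ne (1 : G)
  exact card_orbitRel_quotient_eq_two_iff (fun φ => map_one φ) hg

theorem exists_linearEquiv_apply_eq_of_ne_zero {K V : Type*} [DivisionRing K] [AddCommGroup V]
    [Module K V] {v w : V} (hv : v ≠ 0) (hw : w ≠ 0) : ∃ g : V ≃ₗ[K] V, g v = w := by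
  obtain ⟨g, hg⟩ := Submodule.exists_linearEquiv_restrict_eq
    (LinearEquiv.coord K V v hv ≪≫ₗ LinearEquiv.toSpanNonzeroSingleton K V w hw)
  refine ⟨g, ?_⟩
  simpa [LinearEquiv.coord_self] using (hg ⟨v, Submodule.mem_span_singleton_self v⟩).symm

theorem CommGroup.exists_mulAut_apply_eq_of_pow_eq_one {G : Type*} [CommGroup G] {p : ℕ}
    [Fact p.Prime] (hp : ∀ g : G, g ^ p = 1) {a b : G} (ha : a ≠ 1) (hb : b ≠ 1) :
    ∃ φ : MulAut G, φ a = b := by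
  let _ : Module (ZMod p) (Additive G) :=
    AddCommGroup.zmodModule fun x => congrArg Additive.ofMul (hp x.toMul)
  obtain ⟨g, hg⟩ := exists_linearEquiv_apply_eq_of_ne_zero (K := ZMod p)
    (v := Additive.ofMul a) (w := Additive.ofMul b) ha hb
  exact ⟨MulEquiv.toAdditive.symm g.toAddEquiv, congrArg Additive.toMul hg⟩

section TransitiveOnNonidentity

variable {G : Type*} [Group G]

theorem Subgroup.eq_bot_or_eq_top_of_mulAut_transitive
    (htrans : ∀ a b : G, a ≠ 1 → b ≠ 1 → ∃ φ : MulAut G, φ a = b)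
    (H : Subgroup G) [H.Characteristic] : H = ⊥ ∨ H = ⊤ := by
  refine or_iff_not_imp_left.mpr fun hH => (Subgroup.eq_top_iff' H).mpr fun g => ?_
  obtain ⟨⟨z, hzH⟩, hz⟩ := Subgroup.ne_bot_iff_exists_ne_one.mp hH
  rcases eq_or_ne g 1 with rfl | hg
  · exact H.one_mem
  obtain ⟨φ, rfl⟩ := htrans z g (by simpa using hz) hg
  exact Subgroup.characteristic_iff_le_comap.mp ‹_› φ hzH

theorem exists_prime_forall_pow_eq_one_of_mulAut_transitive [Finite G] [Nontrivial G]
    (htrans : ∀ a b : G, a ≠ 1 → b ≠ 1 → ∃ φ : MulAut G, φ a = b) :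
    ∃ p : ℕ, p.Prime ∧ ∀ g : G, g ^ p = 1 := by
  obtain ⟨p, hp, hpG⟩ := Nat.exists_prime_and_dvd (Finite.one_lt_card (α := G)).ne'
  have : Fact p.Prime := ⟨hp⟩
  obtain ⟨x, hx⟩ := exists_prime_orderOf_dvd_card' p hpG
  have hx1 : x ≠ 1 := by rintro rfl; simp [hp.ne_one.symm] at hx
  refine ⟨p, hp, fun g => ?_⟩
  rcases eq_or_ne g 1 with rfl | hg
  · exact one_pow p
  obtain ⟨φ, rfl⟩ := htrans x g hx1 hg
  rw [← map_pow, ← hx, pow_orderOf_eq_one, map_one]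

theorem mul_comm_of_mulAut_transitive [Finite G] [Nontrivial G]
    (htrans : ∀ a b : G, a ≠ 1 → b ≠ 1 → ∃ φ : MulAut G, φ a = b) (a b : G) :
    a * b = b * a := by
  obtain ⟨p, hp, hpow⟩ := exists_prime_forall_pow_eq_one_of_mulAut_transitive htrans
  have : Fact p.Prime := ⟨hp⟩
  have hG : IsPGroup p G := fun g => ⟨1, by simpa using hpow g⟩
  have hcenter : Subgroup.center G = ⊤ :=
    ((Subgroup.center G).eq_bot_or_eq_top_of_mulAut_transitive htrans).resolve_left
      ((Subgroup.nontrivial_iff_ne_bot _).mp hG.center_nontrivial)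
  exact Subgroup.mem_center_iff.mp (hcenter ▸ Subgroup.mem_top b) a

end TransitiveOnNonidentity

/-- A nontrivial finite group has exactly 2 automorphism orbits iff it is an
elementary abelian `p`-group for some prime `p`. -/
theorem stmt_16 (G : Type*) [Group G] [Finite G] [Nontrivial G] :
    omegaAut G = 2 ↔
      ∃ p : ℕ, p.Prime ∧ (∀ a b : G, a * b = b * a) ∧ ∀ g : G, g ^ p = 1 := by
  rw [omegaAut_eq_two_iff]
  constructor
  · intro htrans
    obtain ⟨p, hp, hpow⟩ := exists_prime_forall_pow_eq_one_of_mulAut_transitive htrans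
    exact ⟨p, hp, mul_comm_of_mulAut_transitive htrans, hpow⟩
  · rintro ⟨p, hp, hcomm, hpow⟩ a b ha hb
    have : Fact p.Prime := ⟨hp⟩
    let _ : CommGroup G := { mul_comm := hcomm }
    exact CommGroup.exists_mulAut_apply_eq_of_pow_eq_one hpow ha hb
end
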